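/- arXiv:2102.06384 — 2 statements merged into one kernel-verified Lean document; each statement's English description precedes it below -/
import Mathlib

section
/- Suppose p + q > 1, and let g be a real number with g ≤ H(ω*). Then the function f₀(ω) = (H(τ(ω)) + H(τ²(ω)) − 2g)/(ω − τ²(ω)) is antitone (nonincreasing) on the interval (0, ω*). (Note that ω − τ²(ω) = (ω − ω*)(1 − (1−p−q)²) < 0 for ω ∈ (0, ω*), so f₀ is well defined there.) -/
/-- The one-step belief update map τ(ω) = p + ω(1 − p − q). -/
noncomputable def tau (p q ω : ℝ) : ℝ := p + ω * (1 - p - q)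

/-- The equilibrium belief state ω* = p/(p+q). -/
noncomputable def wstar (p q : ℝ) : ℝ := p / (p + q)

/-- The binary entropy function H(x) = −x·log₂ x − (1−x)·log₂(1−x). -/
noncomputable def binEnt (x : ℝ) : ℝ := -x * Real.logb 2 x - (1 - x) * Real.logb 2 (1 - x)

lemma binEnt_eq (x : ℝ) : binEnt x = (Real.log 2)⁻¹ * Real.binEntropy x := by
  unfold binEnt Real.binEntropy
  rw [Real.logb, Real.logb, Real.log_inv, Real.log_inv]
  ring

lemma concaveOn_binEnt : ConcaveOn ℝ (Set.Icc (0:ℝ) 1) binEnt := by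
  have h := (Real.strictConcave_binEntropy.concaveOn).smul
    (c := (Real.log 2)⁻¹) (by positivity)
  have e : binEnt = fun x => (Real.log 2)⁻¹ • Real.binEntropy x := by
    funext x
    simp [binEnt_eq, smul_eq_mul]
  rw [e]; exact h

lemma tau_affine (p q x y a b : ℝ) (hab : a + b = 1) :
    tau p q (a * x + b * y) = a * tau p q x + b * tau p q y := by
  unfold tau; linear_combination -p * hab

/-- Suppose p + q > 1 and g ≤ H(ω*). Then
f₀(ω) = (H(τ(ω)) + H(τ²(ω)) − 2g)/(ω − τ²(ω)) is antitone (nonincreasing)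
on (0, ω*). -/
theorem f0_antitone_oscillating_case (p q : ℝ) (hp : 0 < p) (hpq : p ≤ q) (hq : q < 1)
    (hsum : 1 < p + q) (g : ℝ) (hg : g ≤ binEnt (wstar p q)) :
    AntitoneOn
      (fun ω => (binEnt (tau p q ω) + binEnt (tau p q (tau p q ω)) - 2 * g) /
        (ω - tau p q (tau p q ω)))
      (Set.Ioo (0 : ℝ) (wstar p q)) := by
  set w := wstar p q with hw
  have hq0 : 0 < q := lt_of_lt_of_le hp hpq
  have hs0 : 0 < p + q := by linarith
  have hp1 : p < 1 := lt_of_le_of_lt hpq hq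
  have h2s : p + q < 2 := by linarith
  have hw0 : 0 < w := by rw [hw, wstar]; positivity
  have hwp : w < p := by
    rw [hw, wstar, div_lt_iff₀ hs0]; nlinarith
  have hw1 : w < 1 := lt_trans hwp hp1
  -- fixed point
  have htw : tau p q w = w := by
    rw [hw, wstar]; unfold tau; field_simp; ring
  -- τ maps Icc 0 w into Icc 0 1
  have htau_mem : ∀ x ∈ Set.Icc (0:ℝ) w, tau p q x ∈ Set.Icc (0:ℝ) 1 := by
    intro x hx
    obtain ⟨hx0, hxw⟩ := hx
    unfold tau
    constructor
    · nlinarith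
    · nlinarith
  have htau2_mem : ∀ x ∈ Set.Icc (0:ℝ) w, tau p q (tau p q x) ∈ Set.Icc (0:ℝ) 1 := by
    intro x hx
    obtain ⟨h1, h2⟩ := htau_mem x hx
    simp only [tau] at h1 h2 ⊢
    constructor
    · nlinarith [mul_nonneg (by linarith : (0:ℝ) ≤ 1 - (p + x*(1-p-q)))
        (by linarith : (0:ℝ) ≤ p + q - 1)]
    · nlinarith [mul_nonneg h1 (by linarith : (0:ℝ) ≤ p + q - 1)]
  -- the composed function φ
  set φ : ℝ → ℝ := fun x => binEnt (tau p q x) + binEnt (tau p q (tau p q x)) with hφ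
  have hφ1 : ConcaveOn ℝ (Set.Icc (0:ℝ) w) (fun x => binEnt (tau p q x)) := by
    refine ⟨convex_Icc _ _, ?_⟩
    intro x hx y hy a b ha hb hab
    have := concaveOn_binEnt.2 (htau_mem x hx) (htau_mem y hy) ha hb hab
    simpa [smul_eq_mul, tau_affine p q x y a b hab] using this
  have hφ2 : ConcaveOn ℝ (Set.Icc (0:ℝ) w) (fun x => binEnt (tau p q (tau p q x))) := by
    refine ⟨convex_Icc _ _, ?_⟩
    intro x hx y hy a b ha hb hab
    have := concaveOn_binEnt.2 (htau2_mem x hx) (htau2_mem y hy) ha hb hab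
    simpa [smul_eq_mul, tau_affine p q x y a b hab,
      tau_affine p q (tau p q x) (tau p q y) a b hab] using this
  have hφc : ConcaveOn ℝ (Set.Icc (0:ℝ) w) φ := hφ1.add hφ2
  have hφneg : ConvexOn ℝ (Set.Icc (0:ℝ) w) (-φ) := hφc.neg
  -- denominator identity
  have hden : ∀ x : ℝ, x - tau p q (tau p q x) = (1 - (1-p-q)^2) * (x - w) := by
    intro x
    rw [hw, wstar]
    unfold tau
    field_simp
    ring
  have hr2 : 0 < 1 - (1-p-q)^2 := by nlinarith
  have hφw : φ w = 2 * binEnt w := by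
    simp [hφ, htw, two_mul]
  -- main
  intro x hx y hy hxy
  obtain ⟨hx0, hxw⟩ := hx
  obtain ⟨hy0, hyw⟩ := hy
  simp only
  rw [hden x, hden y]
  have hxmem : x ∈ Set.Icc (0:ℝ) w := ⟨hx0.le, hxw.le⟩
  have hymem : y ∈ Set.Icc (0:ℝ) w := ⟨hy0.le, hyw.le⟩
  have hwmem : w ∈ Set.Icc (0:ℝ) w := ⟨hw0.le, le_refl _⟩
  have hxne : x ≠ w := ne_of_lt hxw
  have hyne : y ≠ w := ne_of_lt hyw
  -- secant slope inequality: slope at y ≤ slope at x (concave, both below w)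
  have hsec := hφneg.secant_mono hwmem hxmem hymem hxne hyne hxy
  -- hsec : ((-φ) x - (-φ) w)/(x-w) ≤ ((-φ) y - (-φ) w)/(y-w)
  have hslope : (φ y - φ w) / (y - w) ≤ (φ x - φ w) / (x - w) := by
    have h1 : ((-φ) x - (-φ) w) / (x - w) = -((φ x - φ w) / (x - w)) := by
      simp [neg_div]; ring_nf
    have h2 : ((-φ) y - (-φ) w) / (y - w) = -((φ y - φ w) / (y - w)) := by
      simp [neg_div]; ring_nf
    rw [h1, h2] at hsec
    linarith
  -- constant term
  have hc : 0 ≤ φ w - 2 * g := by rw [hφw]; linarith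
  have hxw' : x - w < 0 := by linarith
  have hyw' : y - w < 0 := by linarith
  have hinv : 1 / (y - w) ≤ 1 / (x - w) :=
    one_div_le_one_div_of_neg_of_le hyw' (by linarith)
  have hconst : (φ w - 2 * g) / (y - w) ≤ (φ w - 2 * g) / (x - w) := by
    have := mul_le_mul_of_nonneg_left hinv hc
    rw [mul_one_div, mul_one_div] at this
    exact this
  -- decompositions
  have hr2ne : (1 - (1-p-q)^2) ≠ 0 := ne_of_gt hr2
  have hxwne : x - w ≠ 0 := ne_of_lt hxw'
  have hywne : y - w ≠ 0 := ne_of_lt hyw'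
  have key : ∀ A B c d : ℝ, d ≠ 0 → c ≠ 0 →
      (A - 2 * g) / (c * d) = ((A - B) / d) / c + ((B - 2 * g) / d) / c := by
    intro A B c d hd hc
    rw [div_div, div_div, ← add_div, mul_comm d c]
    congr 1
    ring
  have hxd := key (φ x) (φ w) (1 - (1-p-q)^2) (x - w) hxwne hr2ne
  have hyd := key (φ y) (φ w) (1 - (1-p-q)^2) (y - w) hywne hr2ne
  show (φ y - 2 * g) / ((1 - (1-p-q)^2) * (y - w)) ≤
      (φ x - 2 * g) / ((1 - (1-p-q)^2) * (x - w))
  rw [hxd, hyd]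
  exact add_le_add ((div_le_div_iff_of_pos_right hr2).mpr hslope)
    ((div_le_div_iff_of_pos_right hr2).mpr hconst)
end

section
/- Suppose p + q > 1 and let ω, ω^l, ω^u be reals with 0 ≤ ω^l < ω* < ω^u ≤ ω ≤ 1 and τ(ω) ≤ ω^l. Then the set { n ∈ ℕ : τ^{2n+1}(ω) ∈ (ω^l, ω^u) } is nonempty and its least element equals ⌊ (1/2)·log_{p+q−1}( (ω* − ω^l)/(ω − ω*) ) − 1/2 ⌋ + 1. -/
lemma tau_iter (p q : ℝ) (hpq : p + q ≠ 0) (ω : ℝ) (k : ℕ) :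
    (tau p q)^[k] ω = wstar p q + (1 - p - q) ^ k * (ω - wstar p q) := by
  induction k with
  | zero => simp
  | succ k ih =>
    rw [Function.iterate_succ_apply', ih, tau, wstar] at *
    field_simp
    ring

/-- Suppose p + q > 1 and 0 ≤ ω^l < ω* < ω^u ≤ ω ≤ 1 with τ(ω) ≤ ω^l.
Then the set { n ∈ ℕ : τ^{2n+1}(ω) ∈ (ω^l, ω^u) } is nonempty and its least element
equals ⌊ (1/2)·log_{p+q−1}( (ω* − ω^l)/(ω − ω*) ) − 1/2 ⌋ + 1. -/
theorem hitting_time_odd_oscillating (p q : ℝ) (hp : 0 < p) (hpq : p ≤ q) (hq : q < 1)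
    (hsum : 1 < p + q) (ω ωl ωu : ℝ) (h1 : 0 ≤ ωl) (h2 : ωl < wstar p q)
    (h3 : wstar p q < ωu) (h4 : ωu ≤ ω) (h5 : ω ≤ 1) (h6 : tau p q ω ≤ ωl) :
    {n : ℕ | (tau p q)^[2 * n + 1] ω ∈ Set.Ioo ωl ωu}.Nonempty ∧
    ((sInf {n : ℕ | (tau p q)^[2 * n + 1] ω ∈ Set.Ioo ωl ωu} : ℕ) : ℤ) =
      ⌊(1 / 2 : ℝ) * Real.logb (p + q - 1) ((wstar p q - ωl) / (ω - wstar p q)) -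
        1 / 2⌋ + 1 := by
  set s : ℝ := p + q - 1 with hs_def
  have hs0 : 0 < s := by simp [hs_def]; linarith
  have hs1 : s < 1 := by simp [hs_def]; linarith
  have hpq0 : p + q ≠ 0 := by positivity
  set w := wstar p q with hw_def
  have hd : 0 < ω - w := by linarith
  set A : ℝ := (w - ωl) / (ω - w) with hA_def
  have hA0 : 0 < A := div_pos (by linarith) hd
  -- τ(ω) = w - s*(ω-w)
  have htau : tau p q ω = w - s * (ω - w) := by
    have := tau_iter p q hpq0 ω 1
    simp only [Function.iterate_one] at this
    rw [this]; ring
  have hAs : A ≤ s := by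
    rw [htau] at h6
    rw [hA_def, div_le_iff₀ hd]
    nlinarith
  have hlogs : Real.log s < 0 := Real.log_neg hs0 hs1
  set L : ℝ := Real.logb s A with hL_def
  have hL1 : 1 ≤ L := by
    rw [hL_def, Real.logb, le_div_iff_of_neg hlogs, one_mul]
    exact Real.log_le_log hA0 hAs
  set x : ℝ := (L - 1) / 2 with hx_def
  have hx0 : 0 ≤ x := by rw [hx_def]; linarith
  -- membership characterization
  have hmem : ∀ n : ℕ, (tau p q)^[2 * n + 1] ω ∈ Set.Ioo ωl ωu ↔ x < n := by
    intro n
    rw [tau_iter p q hpq0 ω]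
    have hneg : (1 - p - q : ℝ) = -s := by rw [hs_def]; ring
    rw [hneg, Odd.neg_pow ⟨n, by ring⟩, Set.mem_Ioo]
    have hpow : 0 < s ^ (2 * n + 1) := pow_pos hs0 _
    constructor
    · rintro ⟨hl, _⟩
      have h1' : s ^ (2 * n + 1) < A := by
        rw [hA_def, lt_div_iff₀ hd]
        have hposprod : 0 < s ^ (2 * n + 1) * (ω - w) := mul_pos hpow hd
        linarith
      have := Real.log_lt_log hpow h1'
      rw [Real.log_pow] at this
      have h2' : L < 2 * n + 1 := by
        rw [hL_def, Real.logb, div_lt_iff_of_neg hlogs]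
        push_cast at this ⊢
        nlinarith
      rw [hx_def]; push_cast at h2' ⊢; linarith
    · intro hn
      have h2' : L < 2 * n + 1 := by
        rw [hx_def] at hn; push_cast at hn ⊢; linarith
      have hlt : ((2 * n + 1 : ℕ) : ℝ) * Real.log s < Real.log A := by
        rw [hL_def, Real.logb, div_lt_iff_of_neg hlogs] at h2'
        push_cast; push_cast at h2'; nlinarith
      have h1' : s ^ (2 * n + 1) < A := by
        have := Real.exp_lt_exp.mpr (by rw [← Real.log_pow] at hlt; exact hlt)
        rwa [Real.exp_log hpow, Real.exp_log hA0] at this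
      have hlA : s ^ (2 * n + 1) * (ω - w) < w - ωl := by
        rw [hA_def, lt_div_iff₀ hd] at h1'; linarith
      have hposprod : 0 < s ^ (2 * n + 1) * (ω - w) := mul_pos hpow hd
      constructor
      · linarith
      · linarith
  set N : ℕ := (⌊x⌋ + 1).toNat with hN_def
  have hfl0 : 0 ≤ ⌊x⌋ := Int.floor_nonneg.mpr hx0
  have hNx : x < N := by
    have : (⌊x⌋ + 1 : ℤ) = (N : ℤ) := (Int.toNat_of_nonneg (by linarith)).symm
    have h' : x < ((⌊x⌋ + 1 : ℤ) : ℝ) := by push_cast; exact Int.lt_floor_add_one x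
    rwa [this] at h'
    
  have hNmem : N ∈ {n : ℕ | (tau p q)^[2 * n + 1] ω ∈ Set.Ioo ωl ωu} := (hmem N).mpr hNx
  have hne : {n : ℕ | (tau p q)^[2 * n + 1] ω ∈ Set.Ioo ωl ωu}.Nonempty := ⟨N, hNmem⟩
  refine ⟨hne, ?_⟩
  have hinf : sInf {n : ℕ | (tau p q)^[2 * n + 1] ω ∈ Set.Ioo ωl ωu} = N := by
    apply le_antisymm (Nat.sInf_le hNmem)
    apply le_csInf hne
    intro m hm
    have hxm : x < m := (hmem m).mp hm
    have : ⌊x⌋ < (m : ℤ) := by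
      have := Int.floor_le x
      exact_mod_cast Int.floor_lt.mpr (by exact_mod_cast hxm)
    have : (⌊x⌋ + 1 : ℤ) ≤ (m : ℤ) := by linarith
    omega
  rw [hinf]
  have hfloor_eq : ⌊(1 / 2 : ℝ) * Real.logb (p + q - 1) ((wstar p q - ωl) / (ω - wstar p q)) - 1 / 2⌋ = ⌊x⌋ := by
    congr 1
    rw [hx_def, hL_def, hA_def, ← hw_def, ← hs_def]
    ring
  rw [hfloor_eq, hN_def, Int.toNat_of_nonneg (by linarith)]
end
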